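/- For every cubic graph H with vertex set V, the graph G obtained by adding a new vertex v adjacent to all vertices of H has basis number at most 3: the family of all triangles {v, a, b} over edges ab of H generates the cycle space of G and has edge-congestion at most 3. -/

import Mathlib

variable {V : Type*} [Fintype V] [DecidableEq V]

/-- An F2-cycle relative to an edge set `E`: a finite set of edges, all belonging to `E`,
in which every vertex has even degree. -/
def IsF2CycleIn (E : Set (Sym2 V)) (C : Finset (Sym2 V)) : Prop :=
  (∀ e ∈ C, e ∈ E) ∧ ∀ v : V, Even ((C.filter (fun e => v ∈ e)).card)

/-- `B` generates the cycle space of the graph with edge set `E`: every F2-cycle is a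
symmetric difference of a subfamily of `B`. -/
def GeneratesIn (E : Set (Sym2 V)) (B : List (Finset (Sym2 V))) : Prop :=
  ∀ C : Finset (Sym2 V), IsF2CycleIn E C →
    ∃ l : List (Finset (Sym2 V)), l.Sublist B ∧ C = l.foldr symmDiff ∅

/-- The basis number of the graph with edge set `E`: the least `k` such that some
family of F2-cycles generating the cycle space uses each edge at most `k` times. -/
noncomputable def bnSet (E : Set (Sym2 V)) : ℕ :=
  sInf {k | ∃ B : List (Finset (Sym2 V)), (∀ X ∈ B, IsF2CycleIn E X) ∧
    GeneratesIn E B ∧ ∀ e : Sym2 V, B.countP (fun X => decide (e ∈ X)) ≤ k}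

/-- The basis number of a graph. -/
noncomputable def SimpleGraph.bn (G : SimpleGraph V) : ℕ := bnSet G.edgeSet
/-- An F2-cycle of `G`. -/
def SimpleGraph.IsF2Cycle {W : Type*} [DecidableEq W] (G : SimpleGraph W)
    (C : Finset (Sym2 W)) : Prop :=
  IsF2CycleIn G.edgeSet C

/-- The join of `H` with one new vertex (`none`) adjacent to every vertex of `H`. -/
def coneGraph (H : SimpleGraph V) : SimpleGraph (Option V) where
  Adj x y := x ≠ y ∧ ((∃ a b, x = some a ∧ y = some b ∧ H.Adj a b) ∨ x = none ∨ y = none)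
  symm := by
    constructor
    rintro x y ⟨hxy, h⟩
    refine ⟨hxy.symm, ?_⟩
    rcases h with ⟨a, b, hx, hy, hab⟩ | h | h
    · exact Or.inl ⟨b, a, hy, hx, hab.symm⟩
    · exact Or.inr (Or.inr h)
    · exact Or.inr (Or.inl h)
  loopless := ⟨fun x h => h.1 rfl⟩

/-- The triangle on the apex `none` and the two endpoints of an edge `e` of `H`,
as a set of edges of the cone graph. -/
def coneTriangle (e : Sym2 V) : Finset (Sym2 (Option V)) :=
  insert (e.map some)
    ((Finset.univ.filter (fun u => u ∈ e)).image fun u => s(Option.none, Option.some u))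

/-! The triangles generate: given an F2-cycle `C`, take the triangles over the edges of `H` that
lie in `C`. An edge `ab` of `H` lies only in its own triangle, so it is hit exactly when it is in
`C`; an apex edge `vu` is hit once for each edge of `H` at `u` lying in `C`, and since `u` has
even degree in `C` this count is odd exactly when `vu ∈ C`. The congestion of an edge `ab` is 1
and that of `vu` is the degree of `u`, i.e. 3. -/

open Finset

theorem Finset.mem_foldr_symmDiff_iff {α : Type*} [DecidableEq α] (l : List (Finset α)) (x : α) :
    x ∈ l.foldr symmDiff ∅ ↔ Odd (l.countP (fun s => decide (x ∈ s))) := by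
  induction l with
  | nil => simp
  | cons s l ih => by_cases hx : x ∈ s <;> simp [mem_symmDiff, ih, hx, Nat.odd_add_one]

theorem Finset.countP_toList {α : Type*} (s : Finset α) (p : α → Prop) [DecidablePred p] :
    s.toList.countP (fun a => decide (p a)) = #(s.filter p) := by
  rw [← Multiset.coe_countP, coe_toList, Multiset.countP_eq_card_filter]
  rfl

theorem Sym2.none_notMem_map_some {α : Type*} (e : Sym2 α) : none ∉ e.map some := by
  simp [Sym2.mem_map]

theorem Sym2.mk_none_ne_map_some {α : Type*} (x : Option α) (e : Sym2 α) :
    s(none, x) ≠ e.map some :=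
  fun h => e.none_notMem_map_some (h ▸ Sym2.mem_mk_left _ _)

theorem Sym2.option_cases {α : Type*} (x : Sym2 (Option α)) :
    x = s(none, none) ∨ (∃ u, x = s(none, some u)) ∨ ∃ e : Sym2 α, x = e.map some := by
  induction x using Sym2.ind with
  | _ p q =>
    match p, q with
    | none, none => exact .inl rfl
    | none, some u => exact .inr (.inl ⟨u, rfl⟩)
    | some a, none => exact .inr (.inl ⟨a, Sym2.eq_swap⟩)
    | some a, some b => exact .inr (.inr ⟨s(a, b), rfl⟩)

theorem coneGraph_adj_none_some {α : Type*} (G : SimpleGraph α) (u : α) :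
    (coneGraph G).Adj none (some u) :=
  ⟨by simp, .inr (.inl rfl)⟩

theorem map_some_mem_edgeSet_coneGraph {α : Type*} {G : SimpleGraph α} {e : Sym2 α} :
    e.map some ∈ (coneGraph G).edgeSet ↔ e ∈ G.edgeSet := by
  induction e using Sym2.ind with
  | _ a b =>
    simp only [Sym2.map_mk, SimpleGraph.mem_edgeSet, coneGraph]
    simpa using fun h => h.ne

theorem mem_coneTriangle {e : Sym2 V} {x : Sym2 (Option V)} :
    x ∈ coneTriangle e ↔ x = e.map some ∨ ∃ u ∈ e, x = s(none, some u) := by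
  simp [coneTriangle, eq_comm]

theorem map_some_mem_coneTriangle {e e' : Sym2 V} : e.map some ∈ coneTriangle e' ↔ e = e' := by
  simp [mem_coneTriangle, (Sym2.map.injective (Option.some_injective V)).eq_iff,
    fun u => (Sym2.mk_none_ne_map_some (some u) e).symm]

theorem apex_edge_mem_coneTriangle {e : Sym2 V} {u : V} :
    s(none, some u) ∈ coneTriangle e ↔ u ∈ e := by
  simp [mem_coneTriangle, Sym2.mk_none_ne_map_some]

theorem none_none_notMem_coneTriangle (e : Sym2 V) : s(none, none) ∉ coneTriangle e := by
  simp [mem_coneTriangle, Sym2.mk_none_ne_map_some]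

theorem coneTriangle_mk (a b : V) :
    coneTriangle s(a, b) = {s(some a, some b), s(none, some a), s(none, some b)} := by
  ext x
  simp [mem_coneTriangle]

variable {H : SimpleGraph V}

theorem coneTriangle_isF2Cycle {e : Sym2 V} (he : e ∈ H.edgeSet) :
    (coneGraph H).IsF2Cycle (coneTriangle e) := by
  refine ⟨fun x hx => ?_, fun w => ?_⟩
  · obtain rfl | ⟨u, -, rfl⟩ := mem_coneTriangle.mp hx
    · exact map_some_mem_edgeSet_coneGraph.mpr he
    · exact coneGraph_adj_none_some H u
  · induction e using Sym2.ind with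
    | _ a b =>
      have hab : a ≠ b := H.ne_of_adj he
      rw [coneTriangle_mk]
      rcases w with _ | w
      · simp [filter_insert, filter_singleton, hab]
      · by_cases ha : w = a
        · subst ha
          simp [filter_insert, filter_singleton, hab, hab.symm]
        by_cases hb : w = b
        · subst hb
          simp [filter_insert, filter_singleton, ha, card_insert_of_notMem]
        · simp [filter_insert, filter_singleton, ha, hb]

theorem card_filter_map_some_mem_coneTriangle (s : Finset (Sym2 V)) (e : Sym2 V) :
    #{e' ∈ s | e.map some ∈ coneTriangle e'} = if e ∈ s then 1 else 0 := by
  simp_rw [map_some_mem_coneTriangle, filter_eq]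
  split_ifs <;> simp

theorem card_filter_apex_edge_mem_coneTriangle (s : Finset (Sym2 V)) (u : V) :
    #{e ∈ s | s(none, some u) ∈ coneTriangle e} = #{e ∈ s | u ∈ e} := by
  simp_rw [apex_edge_mem_coneTriangle]

theorem card_filter_none_none_mem_coneTriangle (s : Finset (Sym2 V)) :
    #{e ∈ s | s(none, none) ∈ coneTriangle e} = 0 := by
  simp [none_none_notMem_coneTriangle]

variable [DecidableRel H.Adj]

theorem card_filter_some_mem_eq_card_add_ite {C : Finset (Sym2 (Option V))}
    (hC : ∀ x ∈ C, x ∈ (coneGraph H).edgeSet) (u : V) :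
    #{x ∈ C | some u ∈ x} =
      #{e ∈ {e ∈ H.edgeFinset | e.map some ∈ C} | u ∈ e} +
        if s(none, some u) ∈ C then 1 else 0 := by
  have hapex : {x ∈ C | some u ∈ x ∧ none ∈ x} = {x ∈ C | x = s(none, some u)} := by
    simp_rw [and_comm, Sym2.mem_and_mem_iff (Option.some_ne_none u).symm]
  have hhor : {x ∈ C | some u ∈ x ∧ none ∉ x} =
      {e ∈ {e ∈ H.edgeFinset | e.map some ∈ C} | u ∈ e}.map Function.Embedding.some.sym2Map := by
    ext x
    rcases Sym2.option_cases x with rfl | ⟨w, rfl⟩ | ⟨e, rfl⟩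
    · simp [(Sym2.mk_none_ne_map_some _ _).symm]
    · simp [(Sym2.mk_none_ne_map_some _ _).symm]
    · simpa [(Sym2.map.injective (Option.some_injective V)).eq_iff] using
        fun _ he => map_some_mem_edgeSet_coneGraph.mp (hC _ he)
  rw [← card_filter_add_card_filter_not (fun x => none ∈ x), filter_filter, filter_filter,
    hapex, hhor, card_map, filter_eq', add_comm]
  split_ifs <;> rfl

theorem mem_iff_odd_card_filter_mem_coneTriangle {C : Finset (Sym2 (Option V))}
    (hC : IsF2CycleIn (coneGraph H).edgeSet C) (x : Sym2 (Option V)) :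
    x ∈ C ↔ Odd #{e ∈ {e ∈ H.edgeFinset | e.map some ∈ C} | x ∈ coneTriangle e} := by
  rcases Sym2.option_cases x with rfl | ⟨u, rfl⟩ | ⟨e, rfl⟩
  · rw [card_filter_none_none_mem_coneTriangle]
    simpa using fun h => (coneGraph H).loopless.irrefl _ (hC.1 _ h)
  · have hdeg := hC.2 (some u)
    rw [card_filter_some_mem_eq_card_add_ite hC.1] at hdeg
    rw [card_filter_apex_edge_mem_coneTriangle]
    split_ifs at hdeg with h <;> simpa [h, Nat.even_add_one] using hdeg
  · have hE : e.map some ∈ C → e ∈ H.edgeSet :=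
      fun h => map_some_mem_edgeSet_coneGraph.mp (hC.1 _ h)
    rw [card_filter_map_some_mem_coneTriangle]
    split_ifs with h <;> simp only [mem_filter, SimpleGraph.mem_edgeFinset] at h
    · simp [h.2]
    · simpa using fun he => h ⟨hE he, he⟩

theorem card_filter_mem_coneTriangle_le {k : ℕ} (hdeg : ∀ u, H.degree u ≤ k) (hk : 1 ≤ k)
    (x : Sym2 (Option V)) : #{e ∈ H.edgeFinset | x ∈ coneTriangle e} ≤ k := by
  rcases Sym2.option_cases x with rfl | ⟨u, rfl⟩ | ⟨e, rfl⟩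
  · simp [card_filter_none_none_mem_coneTriangle]
  · rw [card_filter_apex_edge_mem_coneTriangle, ← SimpleGraph.incidenceFinset_eq_filter,
      SimpleGraph.card_incidenceFinset_eq_degree]
    exact hdeg u
  · rw [card_filter_map_some_mem_coneTriangle]
    split_ifs <;> omega

theorem isF2Cycle_of_mem_map_coneTriangle :
    ∀ X ∈ H.edgeFinset.toList.map coneTriangle, (coneGraph H).IsF2Cycle X := by
  simpa using fun e he => coneTriangle_isF2Cycle he

theorem generatesIn_map_coneTriangle :
    GeneratesIn (coneGraph H).edgeSet (H.edgeFinset.toList.map coneTriangle) := by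
  intro C hC
  refine ⟨(H.edgeFinset.toList.filter (fun e => e.map some ∈ C)).map coneTriangle,
    List.filter_sublist.map _, ?_⟩
  ext x
  simp only [Finset.mem_foldr_symmDiff_iff, List.countP_map, List.countP_filter,
    Function.comp_def, ← Bool.decide_and, Finset.countP_toList, ← filter_filter]
  rw [filter_comm]
  exact mem_iff_odd_card_filter_mem_coneTriangle hC x

theorem countP_mem_map_coneTriangle_le {k : ℕ} (hdeg : ∀ u, H.degree u ≤ k) (hk : 1 ≤ k)
    (x : Sym2 (Option V)) :
    (H.edgeFinset.toList.map coneTriangle).countP (fun X => decide (x ∈ X)) ≤ k := by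
  simp only [List.countP_map, Function.comp_def, Finset.countP_toList]
  exact card_filter_mem_coneTriangle_le hdeg hk x

/-- for a cubic graph `H`, the graph `G` obtained by adding a vertex
adjacent to all of `H` has basis number at most 3: the triangles through the apex over
the edges of `H` are F2-cycles generating the cycle space of `G`, with edge-congestion
at most 3. -/
theorem bn_cone_of_cubic_le_three (H : SimpleGraph V) [DecidableRel H.Adj]
    (hcubic : H.IsRegularOfDegree 3) :
    (∀ X ∈ H.edgeFinset.toList.map coneTriangle, (coneGraph H).IsF2Cycle X) ∧
    GeneratesIn (coneGraph H).edgeSet (H.edgeFinset.toList.map coneTriangle) ∧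
    (∀ e : Sym2 (Option V),
      (H.edgeFinset.toList.map coneTriangle).countP (fun X => decide (e ∈ X)) ≤ 3) ∧
    (coneGraph H).bn ≤ 3 := by
  have hcycles := isF2Cycle_of_mem_map_coneTriangle (H := H)
  have hgen := generatesIn_map_coneTriangle (H := H)
  have hcong := countP_mem_map_coneTriangle_le (fun u => (hcubic u).le) (by norm_num)
  exact ⟨hcycles, hgen, hcong, Nat.sInf_le ⟨_, hcycles, hgen, hcong⟩⟩
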